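/- arXiv:1701.02047 — 9 statements merged into one kernel-verified Lean document; each statement's English description precedes it below -/
import Mathlib

section
/- Let Δ, Γ ≥ 0 with Δ + 4Γ² < 1 and define v₊ = √((1/2)(1 - Δ/2 + √(1 - (4Γ² + Δ)))). Then Γ²/v₊² < 1/2; consequently there exists a unique γ₋ ∈ [0, π/4) with sin(γ₋) = Γ/v₊. -/
open Real

/-- `Γ²/v₊² < 1/2`; consequently there exists a unique `γ₋ ∈ [0, π/4)` with
`sin(γ₋) = Γ/v₊`. -/
theorem stmt_3 (Δ Γ : ℝ) (hΔ : 0 ≤ Δ) (hΓ : 0 ≤ Γ) (h : Δ + 4 * Γ ^ 2 < 1) :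
    let vp := Real.sqrt ((1 / 2) * (1 - Δ / 2 + Real.sqrt (1 - (4 * Γ ^ 2 + Δ))))
    Γ ^ 2 / vp ^ 2 < 1 / 2 ∧
      ∃! γ : ℝ, γ ∈ Set.Ico 0 (π / 4) ∧ Real.sin γ = Γ / vp := by
  intro vp
  set s := Real.sqrt (1 - (4 * Γ ^ 2 + Δ)) with hs_def
  have hs : 0 ≤ s := Real.sqrt_nonneg _
  have hΔ1 : Δ < 1 := by nlinarith [sq_nonneg Γ]
  have hinner : 0 < (1 / 2) * (1 - Δ / 2 + s) := by nlinarith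
  have hvp : 0 < vp := Real.sqrt_pos.2 hinner
  have hvp2 : vp ^ 2 = (1 / 2) * (1 - Δ / 2 + s) := Real.sq_sqrt hinner.le
  have hkey : Γ ^ 2 < vp ^ 2 / 2 := by nlinarith
  have h1 : Γ ^ 2 / vp ^ 2 < 1 / 2 := by
    rw [div_lt_iff₀ (by positivity)]; linarith
  refine ⟨h1, ?_⟩
  set x := Γ / vp with hx_def
  have hx0 : 0 ≤ x := div_nonneg hΓ hvp.le
  have hx2 : x ^ 2 < 1 / 2 := by
    rw [hx_def, div_pow]; exact h1
  have hc2 : (Real.sqrt 2 / 2) ^ 2 = 1 / 2 := by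
    rw [div_pow, Real.sq_sqrt (by norm_num : (2:ℝ) ≥ 0)]; norm_num
  have hxlt : x < Real.sqrt 2 / 2 := by
    by_contra hcon
    push_neg at hcon
    nlinarith [Real.sqrt_nonneg 2]
  have hxsin : x < Real.sin (π / 4) := by rwa [Real.sin_pi_div_four]
  have hx1 : x ≤ 1 := by nlinarith
  have hpi4 : π / 4 ≤ π / 2 := by linarith [pi_pos]
  refine ⟨Real.arcsin x, ⟨⟨Real.arcsin_nonneg.2 hx0, ?_⟩, Real.sin_arcsin (by linarith) hx1⟩, ?_⟩
  · have := (Real.arcsin_lt_iff_lt_sin ⟨by linarith, hx1⟩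
      ⟨by linarith [pi_pos], hpi4⟩).2 hxsin
    exact this
  · rintro γ ⟨⟨hγ0, hγlt⟩, hγsin⟩
    have : Real.arcsin (Real.sin γ) = γ :=
      Real.arcsin_sin (by linarith [pi_pos]) (by linarith)
    rw [← this, hγsin]
end

section
/- Let Δ, Γ ≥ 0 with Δ + 4Γ² < 1. Then the supremum of Γ²/v₊², taken over the set 𝒫 = {(Δ,Γ) ∈ ℝ²≥0 : Δ + 4Γ² < 1}, equals 1/2, where v₊² = (1/2)(1 - Δ/2 + √(1 - (4Γ² + Δ))). -/
open Real

/-- The supremum of `Γ²/v₊²` over `𝒫 = {(Δ,Γ) ∈ ℝ²≥0 : Δ + 4Γ² < 1}` equals `1/2`,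
where `v₊² = (1/2)(1 - Δ/2 + √(1 - (4Γ² + Δ)))`. -/
theorem stmt_4 :
    sSup {r : ℝ | ∃ Δ Γ : ℝ, 0 ≤ Δ ∧ 0 ≤ Γ ∧ Δ + 4 * Γ ^ 2 < 1 ∧
      r = Γ ^ 2 / ((1 / 2) * (1 - Δ / 2 + Real.sqrt (1 - (4 * Γ ^ 2 + Δ))))} = 1 / 2 := by
  apply csSup_eq_of_forall_le_of_forall_lt_exists_gt
  · exact ⟨0, 0, 0, le_refl 0, le_refl 0, by norm_num, by simp⟩
  · rintro r ⟨Δ, Γ, hΔ, hΓ, h, rfl⟩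
    have hs : 0 ≤ Real.sqrt (1 - (4 * Γ ^ 2 + Δ)) := Real.sqrt_nonneg _
    have hΔ1 : Δ < 1 := by nlinarith [sq_nonneg Γ]
    have hden : 0 < (1 / 2 : ℝ) * (1 - Δ / 2 + Real.sqrt (1 - (4 * Γ ^ 2 + Δ))) := by
      nlinarith
    rw [div_le_iff₀ hden]
    nlinarith
  · intro w hw
    have h1 : (0 : ℝ) < min (1 - 2 * w) 1 := lt_min (by linarith) one_pos
    set s : ℝ := min (1 - 2 * w) 1 / 2 with hsdef
    have hs0 : 0 < s := by positivity
    have hs1 : s ≤ 1 / 2 := by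
      have := min_le_right (1 - 2 * w) 1
      simp only [hsdef]; linarith
    have hws : w < (1 - s) / 2 := by
      have := min_le_left (1 - 2 * w) 1
      simp only [hsdef]; linarith
    have h1s : (0 : ℝ) ≤ 1 - s ^ 2 := by nlinarith
    set Γ : ℝ := Real.sqrt (1 - s ^ 2) / 2 with hΓdef
    have hΓsq : Γ ^ 2 = (1 - s ^ 2) / 4 := by
      rw [hΓdef, div_pow, Real.sq_sqrt h1s]; ring
    refine ⟨(1 - s) / 2, ⟨0, Γ, le_refl 0, by positivity, by nlinarith, ?_⟩, hws⟩
    have hin : 1 - (4 * Γ ^ 2 + 0) = s ^ 2 := by rw [hΓsq]; ring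
    rw [hin, Real.sqrt_sq hs0.le, hΓsq]
    have h1ps : (0 : ℝ) < 1 - 0 / 2 + s := by linarith
    field_simp
    ring
end

section
/- (Quartic inequality lemma) Fix real parameters Δ, Γ ≥ 0. The following are equivalent: (i) Δ + 4Γ² < 1; (ii) there exist δ₋ ∈ [0, 1/2) and δ₊ ∈ (1 - 1/√2, 1] with δ₋ < δ₊, given by δ∓ = 1 - √((1/2)(1 - Δ/2 ± √(1 - (Δ + 4Γ²)))), such that the inequality (1-δ)⁴ - (1-δ)²(1 - Δ/2) + Γ² + Δ²/16 ≤ 0 holds for δ ∈ [δ₋, δ₊], with strict inequality for δ in the open interval (δ₋, δ₊), and with equality exactly at δ ∈ {δ₋, δ₊} (among δ ∈ [0,1)). -/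
open Real

set_option maxHeartbeats 1600000 in
/-- Quartic inequality lemma: `Δ + 4Γ² < 1` iff the quartic inequality
`(1-δ)⁴ - (1-δ)²(1 - Δ/2) + Γ² + Δ²/16 ≤ 0` holds exactly on `[δ₋, δ₊]`,
strictly on the interior, with equality precisely at the endpoints (among `δ ∈ [0,1)`). -/
theorem stmt_5 (Δ Γ : ℝ) (hΔ : 0 ≤ Δ) (hΓ : 0 ≤ Γ) :
    (Δ + 4 * Γ ^ 2 < 1) ↔
      ∃ δm δp : ℝ,
        δm = 1 - Real.sqrt ((1 / 2) * (1 - Δ / 2 + Real.sqrt (1 - (Δ + 4 * Γ ^ 2)))) ∧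
        δp = 1 - Real.sqrt ((1 / 2) * (1 - Δ / 2 - Real.sqrt (1 - (Δ + 4 * Γ ^ 2)))) ∧
        δm ∈ Set.Ico (0 : ℝ) (1 / 2) ∧
        δp ∈ Set.Ioc (1 - 1 / Real.sqrt 2) 1 ∧
        δm < δp ∧
        (∀ δ ∈ Set.Icc δm δp,
          (1 - δ) ^ 4 - (1 - δ) ^ 2 * (1 - Δ / 2) + Γ ^ 2 + Δ ^ 2 / 16 ≤ 0) ∧
        (∀ δ ∈ Set.Ioo δm δp,
          (1 - δ) ^ 4 - (1 - δ) ^ 2 * (1 - Δ / 2) + Γ ^ 2 + Δ ^ 2 / 16 < 0) ∧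
        (∀ δ ∈ Set.Ico (0 : ℝ) 1,
          ((1 - δ) ^ 4 - (1 - δ) ^ 2 * (1 - Δ / 2) + Γ ^ 2 + Δ ^ 2 / 16 = 0 ↔
            δ = δm ∨ δ = δp)) := by
  constructor
  · intro hD
    set D : ℝ := 1 - (Δ + 4 * Γ ^ 2) with hDdef
    have hDpos : 0 < D := by simp [hDdef]; linarith
    set s : ℝ := Real.sqrt D with hsdef
    have hs : 0 < s := Real.sqrt_pos.mpr hDpos
    have hs2 : s ^ 2 = D := Real.sq_sqrt hDpos.le
    have hΔ1 : Δ < 1 := by nlinarith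
    set xp : ℝ := (1 / 2) * (1 - Δ / 2 + s) with hxpdef
    set xm : ℝ := (1 / 2) * (1 - Δ / 2 - s) with hxmdef
    have hsle : s ≤ 1 - Δ / 2 := by
      have h1 : D ≤ (1 - Δ / 2) ^ 2 := by nlinarith
      calc s ≤ Real.sqrt ((1 - Δ / 2) ^ 2) := Real.sqrt_le_sqrt h1
        _ = 1 - Δ / 2 := Real.sqrt_sq (by linarith)
    have hs1 : s ≤ 1 := by
      have h1 : D ≤ 1 := by nlinarith
      calc s ≤ Real.sqrt 1 := Real.sqrt_le_sqrt h1
        _ = 1 := Real.sqrt_one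
    have hxm0 : 0 ≤ xm := by rw [hxmdef]; linarith
    have hxmp : xm < xp := by rw [hxmdef, hxpdef]; linarith
    have hxp1 : xp ≤ 1 := by rw [hxpdef]; linarith
    have hxpq : (1:ℝ)/4 < xp := by rw [hxpdef]; linarith
    have hxmh : xm < 1/2 := by rw [hxmdef]; linarith
    set a : ℝ := Real.sqrt xp with hadef
    set b : ℝ := Real.sqrt xm with hbdef
    have ha2 : a ^ 2 = xp := Real.sq_sqrt (by linarith)
    have hb2 : b ^ 2 = xm := Real.sq_sqrt hxm0
    have hb0 : 0 ≤ b := Real.sqrt_nonneg _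
    have ha1 : a ≤ 1 := by
      calc a ≤ Real.sqrt 1 := Real.sqrt_le_sqrt hxp1
        _ = 1 := Real.sqrt_one
    have hah : (1:ℝ)/2 < a := by
      have : Real.sqrt ((1:ℝ)/4) < a := Real.sqrt_lt_sqrt (by norm_num) hxpq
      have h4 : Real.sqrt ((1:ℝ)/4) = 1/2 := by
        rw [show ((1:ℝ)/4) = (1/2)^2 by norm_num, Real.sqrt_sq (by norm_num)]
      linarith [h4 ▸ this]
    have hba : b < a := Real.sqrt_lt_sqrt hxm0 hxmp
    have hbh : b < 1 / Real.sqrt 2 := by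
      have : b < Real.sqrt (1/2) := Real.sqrt_lt_sqrt hxm0 hxmh
      have h2 : Real.sqrt ((1:ℝ)/2) = 1 / Real.sqrt 2 := by
        rw [one_div, one_div, Real.sqrt_inv]
      linarith [h2 ▸ this]
    refine ⟨1 - a, 1 - b, rfl, rfl, ⟨by linarith, by linarith⟩, ⟨by linarith, by linarith⟩,
      by linarith, ?_, ?_, ?_⟩
    · rintro δ ⟨h1, h2⟩
      have hd1 : b ≤ 1 - δ := by linarith
      have hd2 : 1 - δ ≤ a := by linarith
      have hq1 : xm ≤ (1 - δ) ^ 2 := hb2 ▸ pow_le_pow_left₀ hb0 hd1 2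
      have hq2 : (1 - δ) ^ 2 ≤ xp := ha2 ▸ pow_le_pow_left₀ (hb0.trans hd1) hd2 2
      have key : (1 - δ) ^ 4 - (1 - δ) ^ 2 * (1 - Δ / 2) + Γ ^ 2 + Δ ^ 2 / 16 =
          ((1 - δ) ^ 2 - xm) * ((1 - δ) ^ 2 - xp) := by
        rw [hxmdef, hxpdef]; linear_combination (1/4 : ℝ) * hs2
      rw [key]
      exact mul_nonpos_of_nonneg_of_nonpos (by linarith) (by linarith)
    · rintro δ ⟨h1, h2⟩
      have hd1 : b < 1 - δ := by linarith
      have hd2 : 1 - δ < a := by linarith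
      have hq1 : xm < (1 - δ) ^ 2 := hb2 ▸ pow_lt_pow_left₀ hd1 hb0 (by norm_num)
      have hq2 : (1 - δ) ^ 2 < xp := ha2 ▸ pow_lt_pow_left₀ hd2 (hb0.trans hd1.le) (by norm_num)
      have key : (1 - δ) ^ 4 - (1 - δ) ^ 2 * (1 - Δ / 2) + Γ ^ 2 + Δ ^ 2 / 16 =
          ((1 - δ) ^ 2 - xm) * ((1 - δ) ^ 2 - xp) := by
        rw [hxmdef, hxpdef]; linear_combination (1/4 : ℝ) * hs2
      rw [key]
      exact mul_neg_of_pos_of_neg (by linarith) (by linarith)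
    · rintro δ ⟨h0, h1⟩
      have hd0 : 0 < 1 - δ := by linarith
      have key : (1 - δ) ^ 4 - (1 - δ) ^ 2 * (1 - Δ / 2) + Γ ^ 2 + Δ ^ 2 / 16 =
          ((1 - δ) ^ 2 - xm) * ((1 - δ) ^ 2 - xp) := by
        rw [hxmdef, hxpdef]; linear_combination (1/4 : ℝ) * hs2
      rw [key]
      constructor
      · intro h
        rcases mul_eq_zero.mp h with h' | h'
        · right
          have : (1 - δ) ^ 2 = xm := by linarith
          have : 1 - δ = b := by
            rw [hbdef, ← this, Real.sqrt_sq hd0.le]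
          linarith
        · left
          have : (1 - δ) ^ 2 = xp := by linarith
          have : 1 - δ = a := by
            rw [hadef, ← this, Real.sqrt_sq hd0.le]
          linarith
      · rintro (h | h)
        · have : 1 - δ = a := by linarith
          rw [this, ha2]; ring
        · have : 1 - δ = b := by linarith
          rw [this, hb2]; ring
  · rintro ⟨δm, δp, hm, hp, _, _, hlt, _⟩
    by_contra h
    push_neg at h
    have hs0 : Real.sqrt (1 - (Δ + 4 * Γ ^ 2)) = 0 :=
      Real.sqrt_eq_zero'.mpr (by linarith)
    rw [hs0] at hm hp
    rw [hm, hp] at hlt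
    simp at hlt
end

section
/- Let b > 0, V_G > 0, Q_L ≤ 0, p ∈ ℝ, and define Γ = p/(bV_G²) and Δ = -4Q_L/(bV_G²). If Δ + 4Γ² < 1, then the equations p = bV_GV_L sin(η) and Q_L = bV_L² - bV_LV_G cos(η) possess exactly one solution (η, V_L) ∈ [-π/2, π/2] × ℝ_{>0} satisfying V_L/V_G ≥ v₊, where v₊ = √((1/2)(1 - Δ/2 + √(1 - (4Γ² + Δ)))); moreover this solution satisfies V_L/V_G = v₊, and |η| ≤ γ₋ where sin(γ₋) = |Γ|/v₊ with γ₋ ∈ [0, π/4). -/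
/-!
In the normalised unknowns `v = V_L / V_G` and `η` the power flow equations read
`v sin η = Γ` and `v cos η = v² + Δ/4`. Eliminating `η` leaves a quadratic in `v²` whose
roots are `v₊²` and `(1 - Δ/2 - √(1 - 4Γ² - Δ))/2 < v₊²`, so `v ≥ v₊` forces `v = v₊`, and then
`η = arcsin (Γ / v₊)` is pinned down on `[-π/2, π/2]`. Conversely this pair solves the equations
because `v₊² - Γ² = ((1 + √(1 - 4Γ² - Δ))/2)²`. Finally `|η| = arcsin (|Γ| / v₊)` stays below
`π/4` because `2Γ² < v₊²` when `Δ ≥ 0`.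
-/

open Real

namespace Real

lemma abs_arcsin (x : ℝ) : |arcsin x| = arcsin |x| := by
  rcases le_total 0 x with hx | hx
  · rw [abs_of_nonneg hx, abs_of_nonneg (arcsin_nonneg.2 hx)]
  · rw [abs_of_nonpos hx, abs_of_nonpos (arcsin_nonpos.2 hx), arcsin_neg]

lemma arcsin_lt_pi_div_four {x : ℝ} (hx : 2 * x ^ 2 < 1) : arcsin x < π / 4 := by
  rw [arcsin_lt_iff_lt_sin' ⟨by linarith [pi_pos], by linarith [pi_pos]⟩, sin_pi_div_four]
  nlinarith [sq_sqrt (zero_le_two : (0 : ℝ) ≤ 2), sqrt_nonneg 2]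

end Real

lemma powerFlow_iff_normalized {b VG V QL p η : ℝ} (hb : b ≠ 0) (hVG : VG ≠ 0) :
    (p = b * VG * V * sin η ∧ QL = b * V ^ 2 - b * V * VG * cos η) ↔
      V / VG * sin η = p / (b * VG ^ 2) ∧
        V / VG * cos η = (V / VG) ^ 2 + -4 * QL / (b * VG ^ 2) / 4 := by
  field_simp
  constructor <;> rintro ⟨h₁, h₂⟩ <;> constructor <;> linarith

noncomputable def vPlus (Γ Δ : ℝ) : ℝ :=
  √((1 / 2) * (1 - Δ / 2 + √(1 - (4 * Γ ^ 2 + Δ))))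

section vPlus

variable {Γ Δ : ℝ}

lemma vPlus_pos (h : Δ + 4 * Γ ^ 2 < 1) : 0 < vPlus Γ Δ :=
  sqrt_pos.2 (by nlinarith [sqrt_nonneg (1 - (4 * Γ ^ 2 + Δ)), sq_nonneg Γ])

lemma sq_vPlus (h : Δ + 4 * Γ ^ 2 < 1) :
    vPlus Γ Δ ^ 2 = (1 / 2) * (1 - Δ / 2 + √(1 - (4 * Γ ^ 2 + Δ))) :=
  sq_sqrt (by nlinarith [sqrt_nonneg (1 - (4 * Γ ^ 2 + Δ)), sq_nonneg Γ])

lemma sq_sqrt_discr (h : Δ + 4 * Γ ^ 2 < 1) :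
    √(1 - (4 * Γ ^ 2 + Δ)) ^ 2 = 1 - (4 * Γ ^ 2 + Δ) :=
  sq_sqrt (by linarith)

lemma sq_vPlus_sub_sq (h : Δ + 4 * Γ ^ 2 < 1) :
    vPlus Γ Δ ^ 2 - Γ ^ 2 = ((1 + √(1 - (4 * Γ ^ 2 + Δ))) / 2) ^ 2 := by
  rw [sq_vPlus h]
  linear_combination (-1 / 4 : ℝ) * sq_sqrt_discr h

lemma abs_le_vPlus (h : Δ + 4 * Γ ^ 2 < 1) : |Γ| ≤ vPlus Γ Δ :=
  abs_le_of_sq_le_sq (by nlinarith [sq_vPlus_sub_sq h]) (vPlus_pos h).le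

lemma two_mul_sq_lt_sq_vPlus (hΔ : 0 ≤ Δ) (h : Δ + 4 * Γ ^ 2 < 1) :
    2 * Γ ^ 2 < vPlus Γ Δ ^ 2 := by
  have hS : 0 < √(1 - (4 * Γ ^ 2 + Δ)) := sqrt_pos.2 (by linarith)
  rw [sq_vPlus h]
  nlinarith [sq_sqrt_discr h]

lemma eq_vPlus_of_flow {η v : ℝ} (h : Δ + 4 * Γ ^ 2 < 1) (hv : 0 ≤ v)
    (hsin : v * sin η = Γ) (hcos : v * cos η = v ^ 2 + Δ / 4) (hge : vPlus Γ Δ ≤ v) :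
    v = vPlus Γ Δ := by
  have hS : 0 < √(1 - (4 * Γ ^ 2 + Δ)) := sqrt_pos.2 (by linarith)
  have hpyth : Γ ^ 2 + (v ^ 2 + Δ / 4) ^ 2 = v ^ 2 := by
    rw [← hsin, ← hcos]
    linear_combination v ^ 2 * sin_sq_add_cos_sq η
  have hroots : (v ^ 2 - vPlus Γ Δ ^ 2) *
      (v ^ 2 - (1 / 2) * (1 - Δ / 2 - √(1 - (4 * Γ ^ 2 + Δ)))) = 0 := by
    rw [sq_vPlus h]
    linear_combination hpyth - (1 / 4 : ℝ) * sq_sqrt_discr h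
  have hsq : vPlus Γ Δ ^ 2 ≤ v ^ 2 := pow_le_pow_left₀ (vPlus_pos h).le hge 2
  refine (sq_eq_sq₀ hv (vPlus_pos h).le).1 ?_
  rcases mul_eq_zero.1 hroots with h₀ | h₀
  · linarith
  · rw [sq_vPlus h] at hsq
    linarith

lemma flow_vPlus_arcsin (h : Δ + 4 * Γ ^ 2 < 1) :
    vPlus Γ Δ * sin (arcsin (Γ / vPlus Γ Δ)) = Γ ∧
      vPlus Γ Δ * cos (arcsin (Γ / vPlus Γ Δ)) = vPlus Γ Δ ^ 2 + Δ / 4 := by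
  have hvp := vPlus_pos h
  have hratio : |Γ / vPlus Γ Δ| ≤ 1 := by
    rw [abs_div, abs_of_pos hvp, div_le_one hvp]; exact abs_le_vPlus h
  have hsq := sq_vPlus h
  have hdiff := sq_vPlus_sub_sq h
  have hS := sqrt_nonneg (1 - (4 * Γ ^ 2 + Δ))
  generalize √(1 - (4 * Γ ^ 2 + Δ)) = S at hsq hdiff hS
  constructor
  · rw [sin_arcsin' (abs_le.1 hratio)]
    field_simp
  · have hcos : 1 - (Γ / vPlus Γ Δ) ^ 2 = ((1 + S) / 2 / vPlus Γ Δ) ^ 2 := by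
      field_simp
      linear_combination 4 * hdiff
    rw [cos_arcsin, hcos, sqrt_sq (by positivity), hsq]
    field_simp
    ring

lemma eq_vPlus_arcsin_of_flow {η v : ℝ} (h : Δ + 4 * Γ ^ 2 < 1)
    (hη : η ∈ Set.Icc (-(π / 2)) (π / 2)) (hv : 0 ≤ v)
    (hsin : v * sin η = Γ) (hcos : v * cos η = v ^ 2 + Δ / 4) (hge : vPlus Γ Δ ≤ v) :
    v = vPlus Γ Δ ∧ η = arcsin (Γ / vPlus Γ Δ) := by
  have hveq := eq_vPlus_of_flow h hv hsin hcos hge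
  have hsinη : sin η = Γ / vPlus Γ Δ := by
    rw [eq_div_iff (vPlus_pos h).ne', mul_comm, ← hveq, hsin]
  exact ⟨hveq, by rw [← hsinη, arcsin_sin hη.1 hη.2]⟩

end vPlus

/-- Two-bus solvability: under `Δ + 4Γ² < 1` there is exactly one solution
`(η, V_L) ∈ [-π/2, π/2] × ℝ_{>0}` with `V_L/V_G ≥ v₊`; moreover that solution
satisfies `V_L/V_G = v₊` and `|η| ≤ γ₋`, where `γ₋ = arcsin(|Γ|/v₊) ∈ [0, π/4)`. -/
theorem stmt_9 (b VG QL p : ℝ) (hb : 0 < b) (hVG : 0 < VG) (hQL : QL ≤ 0)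
    (Γ Δ : ℝ) (hΓdef : Γ = p / (b * VG ^ 2)) (hΔdef : Δ = -4 * QL / (b * VG ^ 2))
    (h : Δ + 4 * Γ ^ 2 < 1) :
    let vp := Real.sqrt ((1 / 2) * (1 - Δ / 2 + Real.sqrt (1 - (4 * Γ ^ 2 + Δ))))
    let γm := Real.arcsin (|Γ| / vp)
    (∃! s : ℝ × ℝ, s.1 ∈ Set.Icc (-(π / 2)) (π / 2) ∧ 0 < s.2 ∧
        p = b * VG * s.2 * Real.sin s.1 ∧
        QL = b * s.2 ^ 2 - b * s.2 * VG * Real.cos s.1 ∧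
        s.2 / VG ≥ vp) ∧
      γm ∈ Set.Ico (0 : ℝ) (π / 4) ∧ Real.sin γm = |Γ| / vp ∧
      (∀ s : ℝ × ℝ, s.1 ∈ Set.Icc (-(π / 2)) (π / 2) → 0 < s.2 →
        p = b * VG * s.2 * Real.sin s.1 →
        QL = b * s.2 ^ 2 - b * s.2 * VG * Real.cos s.1 →
        s.2 / VG ≥ vp →
        s.2 / VG = vp ∧ |s.1| ≤ γm) := by
  intro vp γm
  have hΔ : 0 ≤ Δ := hΔdef ▸ div_nonneg (by linarith) (by positivity)
  have hvp : 0 < vp := vPlus_pos h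
  have hflow : ∀ η V, (p = b * VG * V * sin η ∧ QL = b * V ^ 2 - b * V * VG * cos η) ↔
      V / VG * sin η = Γ ∧ V / VG * cos η = (V / VG) ^ 2 + Δ / 4 := fun _ _ => by
    subst hΓdef hΔdef; exact powerFlow_iff_normalized hb.ne' hVG.ne'
  have hsol : ∀ s : ℝ × ℝ, s.1 ∈ Set.Icc (-(π / 2)) (π / 2) → 0 < s.2 →
      p = b * VG * s.2 * sin s.1 → QL = b * s.2 ^ 2 - b * s.2 * VG * cos s.1 →
      s.2 / VG ≥ vp → s.2 / VG = vp ∧ s.1 = arcsin (Γ / vp) := by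
    rintro ⟨η, V⟩ hη hV hp hQ hge
    obtain ⟨hsin, hcos⟩ := (hflow η V).1 ⟨hp, hQ⟩
    exact eq_vPlus_arcsin_of_flow h hη (by positivity) hsin hcos hge
  have hratio : |Γ| / vp ≤ 1 := (div_le_one hvp).2 (abs_le_vPlus h)
  have hratio₀ : 0 ≤ |Γ| / vp := by positivity
  refine ⟨⟨(arcsin (Γ / vp), vp * VG), ⟨⟨neg_pi_div_two_le_arcsin _, arcsin_le_pi_div_two _⟩,
      by positivity, ?_⟩, fun s hs => ?_⟩, ⟨arcsin_nonneg.2 hratio₀, arcsin_lt_pi_div_four ?_⟩,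
      sin_arcsin (by linarith) hratio, fun s hη hV hp hQ hge => ?_⟩
  · obtain ⟨hp, hQ⟩ := (hflow (arcsin (Γ / vp)) (vp * VG)).2 <| by
      rw [mul_div_cancel_right₀ _ hVG.ne']; exact flow_vPlus_arcsin h
    exact ⟨hp, hQ, (mul_div_cancel_right₀ _ hVG.ne').ge⟩
  · obtain ⟨hv, hη⟩ := hsol s hs.1 hs.2.1 hs.2.2.1 hs.2.2.2.1 hs.2.2.2.2
    exact Prod.ext hη ((div_eq_iff hVG.ne').1 hv)
  · rw [div_pow, sq_abs, mul_div_assoc', div_lt_one (by positivity)]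
    exact two_mul_sq_lt_sq_vPlus hΔ h
  · obtain ⟨hv, hη⟩ := hsol s hη hV hp hQ hge
    refine ⟨hv, le_of_eq ?_⟩
    rw [hη, abs_arcsin, abs_div, abs_of_pos hvp]
end

section
/- Let b > 0, V_G > 0, Q_L ≤ 0, p ∈ ℝ with Δ = -4Q_L/(bV_G²), Γ = p/(bV_G²) satisfying Δ + 4Γ² < 1. Define v± = √((1/2)(1 - Δ/2 ± √(1 - (4Γ² + Δ)))). Then the two-bus power flow equations p = bV_GV_L sin(η), Q_L = bV_L² - bV_LV_G cos(η) have no solution (η, V_L) ∈ [-π/2, π/2] × ℝ_{>0} with v₋ < V_L/V_G < v₊, and no solution with V_L/V_G > 1. -/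
/-!
Normalise by `u = V_L / V_G`: the flow equations become `Γ = u sin η` and
`u² + Δ/4 = u cos η`, so `sin² η + cos² η = 1` makes `u²` a root of the quadratic
`x² - (1 - Δ/2) x + Γ² + Δ²/16`, whose roots are `v₊²` and `v₋²`. Hence `u ∈ {v₋, v₊}`,
which excludes `v₋ < u < v₊`; and `u² ≤ u² + Δ/4 = u cos η ≤ u` gives `u ≤ 1`.
-/

open Real

theorem eq_sqrt_or_eq_sqrt_of_sq_sub_mul_add_eq_zero {x c d : ℝ} (h : x ^ 2 - c * x + d = 0) :
    x = (1 / 2) * (c + √(c ^ 2 - 4 * d)) ∨ x = (1 / 2) * (c - √(c ^ 2 - 4 * d)) := by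
  have hquad : 1 * (x * x) + -c * x + d = 0 := by linear_combination h
  have hdiscrim : discrim 1 (-c) d = (2 * 1 * x + -c) ^ 2 :=
    discrim_eq_sq_of_quadratic_eq_zero hquad
  have hsqrt : discrim 1 (-c) d = √(c ^ 2 - 4 * d) * √(c ^ 2 - 4 * d) := by
    rw [mul_self_sqrt (by rw [discrim] at hdiscrim; nlinarith)]
    simp only [discrim]
    ring
  rcases (quadratic_eq_zero_iff one_ne_zero hsqrt x).mp hquad with hx | hx
  · left; rw [hx]; ring
  · right; rw [hx]; ring

theorem eq_sqrt_or_eq_sqrt_of_sin_of_cos {u Γ Δ η : ℝ} (hu : 0 ≤ u)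
    (hsin : Γ = u * sin η) (hcos : u ^ 2 + Δ / 4 = u * cos η) :
    u = √((1 / 2) * (1 - Δ / 2 + √(1 - (4 * Γ ^ 2 + Δ)))) ∨
      u = √((1 / 2) * (1 - Δ / 2 - √(1 - (4 * Γ ^ 2 + Δ)))) := by
  have hquad : (u ^ 2) ^ 2 - (1 - Δ / 2) * u ^ 2 + (Γ ^ 2 + Δ ^ 2 / 16) = 0 := by
    linear_combination (Γ + u * sin η) * hsin + (u ^ 2 + Δ / 4 + u * cos η) * hcos +
      u ^ 2 * sin_sq_add_cos_sq η
  have hdiscrim : (1 - Δ / 2) ^ 2 - 4 * (Γ ^ 2 + Δ ^ 2 / 16) = 1 - (4 * Γ ^ 2 + Δ) := by ring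
  rw [← sqrt_sq hu]
  rcases eq_sqrt_or_eq_sqrt_of_sq_sub_mul_add_eq_zero hquad with hu2 | hu2 <;> rw [hdiscrim] at hu2
  · exact .inl (congrArg _ hu2)
  · exact .inr (congrArg _ hu2)

theorem le_one_of_sq_add_eq_mul_cos {u Δ η : ℝ} (hu : 0 < u) (hΔ : 0 ≤ Δ)
    (hcos : u ^ 2 + Δ / 4 = u * cos η) : u ≤ 1 := by
  nlinarith [cos_le_one η]

theorem stmt_10_general (b VG QL p : ℝ) (hb : 0 < b) (hVG : 0 < VG) (hQL : QL ≤ 0)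
    (Γ Δ : ℝ) (hΓdef : Γ = p / (b * VG ^ 2)) (hΔdef : Δ = -4 * QL / (b * VG ^ 2)) :
    let vp := Real.sqrt ((1 / 2) * (1 - Δ / 2 + Real.sqrt (1 - (4 * Γ ^ 2 + Δ))))
    let vm := Real.sqrt ((1 / 2) * (1 - Δ / 2 - Real.sqrt (1 - (4 * Γ ^ 2 + Δ))))
    ∀ η VL : ℝ, η ∈ Set.Icc (-(π / 2)) (π / 2) → 0 < VL →
      p = b * VG * VL * Real.sin η →
      QL = b * VL ^ 2 - b * VL * VG * Real.cos η →
      ¬(vm < VL / VG ∧ VL / VG < vp) ∧ ¬(VL / VG > 1) := by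
  intro vp vm η VL _ hVL hp hQ
  have hbVG2 : 0 < b * VG ^ 2 := by positivity
  have hsin : Γ = VL / VG * sin η := by
    rw [hΓdef, hp]; field_simp
  have hcos : (VL / VG) ^ 2 + Δ / 4 = VL / VG * cos η := by
    rw [hΔdef, hQ]; field_simp; ring
  have hΔ : 0 ≤ Δ := by
    rw [hΔdef]; exact div_nonneg (by linarith) hbVG2.le
  have hu : 0 < VL / VG := div_pos hVL hVG
  refine ⟨?_, not_lt.mpr (le_one_of_sq_add_eq_mul_cos hu hΔ hcos)⟩
  rintro ⟨hvm, hvp⟩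
  rcases eq_sqrt_or_eq_sqrt_of_sin_of_cos hu.le hsin hcos with h | h
  · exact hvp.ne h
  · exact hvm.ne' h

/-- No medium-voltage and no extra-high-voltage solutions of the two-bus power
flow equations: no solution has `v₋ < V_L/V_G < v₊`, and none has `V_L/V_G > 1`. -/
theorem stmt_10 (b VG QL p : ℝ) (hb : 0 < b) (hVG : 0 < VG) (hQL : QL ≤ 0)
    (Γ Δ : ℝ) (hΓdef : Γ = p / (b * VG ^ 2)) (hΔdef : Δ = -4 * QL / (b * VG ^ 2))
    (h : Δ + 4 * Γ ^ 2 < 1) :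
    let vp := Real.sqrt ((1 / 2) * (1 - Δ / 2 + Real.sqrt (1 - (4 * Γ ^ 2 + Δ))))
    let vm := Real.sqrt ((1 / 2) * (1 - Δ / 2 - Real.sqrt (1 - (4 * Γ ^ 2 + Δ))))
    ∀ η VL : ℝ, η ∈ Set.Icc (-(π / 2)) (π / 2) → 0 < VL →
      p = b * VG * VL * Real.sin η →
      QL = b * VL ^ 2 - b * VL * VG * Real.cos η →
      ¬(vm < VL / VG ∧ VL / VG < vp) ∧ ¬(VL / VG > 1) :=
  stmt_10_general b VG QL p hb hVG hQL Γ Δ hΓdef hΔdef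
end

section
/- Let Δ, Γ ≥ 0 with Δ + 4Γ² < 1 and let v₊, v₋ be the two nonnegative roots of v⁴ - v²(1 - Δ/2) + Δ²/16 + Γ² = 0 with v₋ ≤ v₊. Define γ± ∈ [0, π/2) by sin(γ±) = Γ/v∓. Then γ₋ ∈ [0, π/4), γ₊ ∈ [0, π/2), and γ₋ ≤ γ₊ with strict inequality whenever Γ > 0. -/
open Real

private lemma aux_slt (s Δ Γ : ℝ) (hs0 : 0 < s)
    (hs2 : s ^ 2 = 1 - (4 * Γ ^ 2 + Δ)) (hΓ0 : 0 < Γ) : s < 1 - Δ / 2 := by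
  nlinarith [hs0, hs2, sq_nonneg Δ, mul_pos hΓ0 hΓ0]

/-- With `sin(γ±) = Γ/v∓`, one has `γ₋ ∈ [0, π/4)`, `γ₊ ∈ [0, π/2)`, `γ₋ ≤ γ₊`,
with strict inequality whenever `Γ > 0`. -/
theorem stmt_11 (Δ Γ : ℝ) (hΔ : 0 ≤ Δ) (hΓ : 0 ≤ Γ) (h : Δ + 4 * Γ ^ 2 < 1) :
    let vp := Real.sqrt ((1 / 2) * (1 - Δ / 2 + Real.sqrt (1 - (4 * Γ ^ 2 + Δ))))
    let vm := Real.sqrt ((1 / 2) * (1 - Δ / 2 - Real.sqrt (1 - (4 * Γ ^ 2 + Δ))))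
    ∀ γm γp : ℝ, γm ∈ Set.Ico 0 (π / 2) → γp ∈ Set.Ico 0 (π / 2) →
      Real.sin γm = Γ / vp → Real.sin γp = Γ / vm →
      γm ∈ Set.Ico 0 (π / 4) ∧ γp ∈ Set.Ico 0 (π / 2) ∧ γm ≤ γp ∧
        (0 < Γ → γm < γp) := by
  intro vp vm γm γp hγm hγp hsm hsp
  obtain ⟨hγm0, hγm1⟩ := hγm
  obtain ⟨hγp0, hγp1⟩ := hγp
  have hπ := Real.pi_pos
  have h1 : 0 < 1 - (4 * Γ ^ 2 + Δ) := by nlinarith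
  set s := Real.sqrt (1 - (4 * Γ ^ 2 + Δ)) with hs
  have hs0 : 0 < s := Real.sqrt_pos.mpr h1
  have hs2 : s ^ 2 = 1 - (4 * Γ ^ 2 + Δ) := Real.sq_sqrt h1.le
  have hvpA : 0 < (1 / 2) * (1 - Δ / 2 + s) := by nlinarith
  have hvp2 : vp ^ 2 = (1 / 2) * (1 - Δ / 2 + s) := Real.sq_sqrt hvpA.le
  have hvp0 : 0 < vp := Real.sqrt_pos.mpr hvpA
  have hsle : s ≤ 1 - Δ / 2 := by nlinarith [hs0.le]
  have hvmA : 0 ≤ (1 / 2) * (1 - Δ / 2 - s) := by nlinarith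
  have hvm2 : vm ^ 2 = (1 / 2) * (1 - Δ / 2 - s) := Real.sq_sqrt hvmA
  have hvm0 : 0 ≤ vm := Real.sqrt_nonneg _
  have hvmp : vm ≤ vp := Real.sqrt_le_sqrt (by nlinarith)
  clear_value vp vm s
  have hmm : γm ∈ Set.Icc (-(π/2)) (π/2) := ⟨by linarith, hγm1.le⟩
  have hmp : γp ∈ Set.Icc (-(π/2)) (π/2) := ⟨by linarith, hγp1.le⟩
  have hm4 : π/4 ∈ Set.Icc (-(π/2)) (π/2) := ⟨by linarith, by linarith⟩
  have hm0 : (0:ℝ) ∈ Set.Icc (-(π/2)) (π/2) := ⟨by linarith, by linarith⟩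
  have hq : Γ / vp < Real.sqrt 2 / 2 := by
    have hq0 : 0 ≤ Γ / vp := div_nonneg hΓ hvp0.le
    have hq2 : (Γ / vp) ^ 2 < 1 / 2 := by
      rw [div_pow, div_lt_iff₀ (by positivity)]
      nlinarith
    have h2 : (Real.sqrt 2 / 2) ^ 2 = 1 / 2 := by
      rw [div_pow, Real.sq_sqrt] <;> norm_num
    by_contra hc
    push_neg at hc
    have hh := pow_le_pow_left₀ (by positivity : (0:ℝ) ≤ Real.sqrt 2 / 2) hc 2
    linarith
  have hγm4 : γm < π / 4 := by
    apply (Real.strictMonoOn_sin.lt_iff_lt hmm hm4).mp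
    rw [hsm, Real.sin_pi_div_four]; exact hq
  have hstrict : 0 < Γ → γm < γp := by
    intro hΓ0
    have hslt : s < 1 - Δ / 2 := aux_slt s Δ Γ hs0 hs2 hΓ0
    have hsq : 0 < vm ^ 2 := by rw [hvm2]; linarith
    have hvm0' : 0 < vm := hvm0.lt_of_ne (by
      intro he; rw [← he] at hsq; simp at hsq)
    have hlt : vm < vp := by
      have h2 : vm ^ 2 < vp ^ 2 := by rw [hvm2, hvp2]; linarith
      exact lt_of_pow_lt_pow_left₀ 2 hvp0.le h2
    have hdiv : Γ / vp < Γ / vm := div_lt_div_of_pos_left hΓ0 hvm0' hlt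
    exact (Real.strictMonoOn_sin.lt_iff_lt hmm hmp).mp (by rw [hsm, hsp]; exact hdiv)
  refine ⟨⟨hγm0, hγm4⟩, ⟨hγp0, hγp1⟩, ?_, hstrict⟩
  rcases hΓ.lt_or_eq with hΓ0 | hΓ0
  · exact (hstrict hΓ0).le
  · have hz : γm = 0 := by
      apply Real.strictMonoOn_sin.injOn hmm hm0
      rw [hsm, ← hΓ0, Real.sin_zero]; simp
    linarith
end

section
/- Let Δ, Γ ≥ 0 and define δ₋ = 1 - √((1/2)(1 - Δ/2 + √(1 - (Δ + 4Γ²)))) and β(Δ,Γ) = (Δ/4)·(1-δ₋)⁻² + Γ²(1-δ₋)⁻³ / √(1 - Γ²/(1-δ₋)²). If Δ + 4Γ² = 1 (with the expressions interpreted via the limit 1-δ₋ = √((1-Δ/2)/2)), then β(Δ,Γ) = 1. -/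
/-!
Write `c = 1 - δ₋`, so that `4c² = 2 - Δ`. On the curve `Δ + 4Γ² = 1` this gives
`4(c² - Γ²) = 1`, hence `√(1 - Γ²/c²) = 1/(2c)` and the two terms of `β` combine to
`(Δ + 8Γ²)/(4c²) = (2 - Δ)/(2 - Δ) = 1`.
-/

open Real

/-- `β(Δ, Γ)` as a function of `c = 1 - δ₋`. -/
noncomputable def contractionBound (Δ Γ c : ℝ) : ℝ :=
  Δ / 4 * c⁻¹ ^ 2 + Γ ^ 2 * c⁻¹ ^ 3 / √(1 - Γ ^ 2 / c ^ 2)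

lemma sqrt_one_sub_sq_div_sq {Γ c : ℝ} (hc : 0 < c) (hcΓ : 4 * (c ^ 2 - Γ ^ 2) = 1) :
    √(1 - Γ ^ 2 / c ^ 2) = (2 * c)⁻¹ := by
  have hsq : 1 - Γ ^ 2 / c ^ 2 = (2 * c)⁻¹ ^ 2 := by
    field_simp
    linear_combination hcΓ
  rw [hsq, sqrt_sq (by positivity)]

lemma contractionBound_eq {Δ Γ c : ℝ} (hc : 0 < c) (hcΓ : 4 * (c ^ 2 - Γ ^ 2) = 1) :
    contractionBound Δ Γ c = (Δ + 8 * Γ ^ 2) / (4 * c ^ 2) := by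
  rw [contractionBound, sqrt_one_sub_sq_div_sq hc hcΓ]
  field_simp
  ring

theorem stmt_14_general (Δ Γ : ℝ) (h : Δ + 4 * Γ ^ 2 = 1) :
    let δm := 1 - Real.sqrt ((1 - Δ / 2) / 2)
    (Δ / 4) * (1 - δm)⁻¹ ^ 2 +
        Γ ^ 2 * (1 - δm)⁻¹ ^ 3 / Real.sqrt (1 - Γ ^ 2 / (1 - δm) ^ 2) = 1 := by
  intro δm
  set c := √((1 - Δ / 2) / 2)
  have hΔ : Δ ≤ 1 := by nlinarith [sq_nonneg Γ]
  have hc : 0 < c := sqrt_pos.mpr (by linarith)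
  have hc2 : 4 * c ^ 2 = 2 - Δ := by
    rw [sq_sqrt (by linarith)]
    ring
  have hcΓ : 4 * (c ^ 2 - Γ ^ 2) = 1 := by linear_combination hc2 - h
  change contractionBound Δ Γ (1 - δm) = 1
  rw [show 1 - δm = c by ring, contractionBound_eq hc hcΓ, hc2, div_eq_one_iff_eq (by linarith)]
  linarith

/-- On the boundary curve `Δ + 4Γ² = 1`, the contraction-rate bound satisfies
`β(Δ,Γ) = 1`, where `1 - δ₋ = √((1 - Δ/2)/2)`. -/
theorem stmt_14 (Δ Γ : ℝ) (hΔ : 0 ≤ Δ) (hΓ : 0 ≤ Γ) (h : Δ + 4 * Γ ^ 2 = 1) :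
    let δm := 1 - Real.sqrt ((1 - Δ / 2) / 2)
    (Δ / 4) * (1 - δm)⁻¹ ^ 2 +
        Γ ^ 2 * (1 - δm)⁻¹ ^ 3 / Real.sqrt (1 - Γ ^ 2 / (1 - δm) ^ 2) = 1 :=
  stmt_14_general Δ Γ h
end

section
/- Let Δ, Γ ≥ 0 with Δ + 4Γ² < 1, set δ₋ = 1 - √((1/2)(1 - Δ/2 + √(1 - (Δ + 4Γ²)))), and define β(Δ,Γ) = (Δ/4)(1-δ₋)⁻² + Γ²(1-δ₋)⁻³/√(1 - Γ²/(1-δ₋)²). Then β(Δ,Γ) < 1. -/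
open Real

set_option maxHeartbeats 1000000

/-- Under `Δ + 4Γ² < 1`, the contraction-rate bound satisfies `β(Δ,Γ) < 1`. -/
theorem stmt_15 (Δ Γ : ℝ) (hΔ : 0 ≤ Δ) (hΓ : 0 ≤ Γ) (h : Δ + 4 * Γ ^ 2 < 1) :
    let δm := 1 - Real.sqrt ((1 / 2) * (1 - Δ / 2 + Real.sqrt (1 - (Δ + 4 * Γ ^ 2))))
    (Δ / 4) * (1 - δm)⁻¹ ^ 2 +
        Γ ^ 2 * (1 - δm)⁻¹ ^ 3 / Real.sqrt (1 - Γ ^ 2 / (1 - δm) ^ 2) < 1 := by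
  have hΓ2 : 0 ≤ Γ ^ 2 := sq_nonneg Γ
  set r := Real.sqrt (1 - (Δ + 4 * Γ ^ 2)) with hrdef
  have hr0 : 0 ≤ r := Real.sqrt_nonneg _
  have hr2 : r ^ 2 = 1 - (Δ + 4 * Γ ^ 2) := Real.sq_sqrt (by linarith)
  set s := Real.sqrt ((1 / 2) * (1 - Δ / 2 + r)) with hsdef
  have hs2 : s ^ 2 = (1 / 2) * (1 - Δ / 2 + r) := Real.sq_sqrt (by nlinarith)
  have hs2q : (1 : ℝ) / 4 < s ^ 2 := by nlinarith
  have hs : (1 : ℝ) / 2 < s := by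
    nlinarith [Real.sqrt_nonneg ((1 / 2) * (1 - Δ / 2 + r))]
  have hspos : 0 < s := by linarith
  have hΓs : Γ ^ 2 < s ^ 2 := by nlinarith
  have hq0 : 0 < 1 - Γ ^ 2 / s ^ 2 := by
    rw [sub_pos, div_lt_one (by positivity)]; exact hΓs
  set q := Real.sqrt (1 - Γ ^ 2 / s ^ 2) with hqdef
  have hq : 0 < q := Real.sqrt_pos.mpr hq0
  have hq2 : q ^ 2 = 1 - Γ ^ 2 / s ^ 2 := Real.sq_sqrt (le_of_lt hq0)
  have hsq2 : (s * q) ^ 2 = s ^ 2 - Γ ^ 2 := by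
    rw [mul_pow, hq2]
    field_simp
  have e1 : (s ^ 2 - Δ / 4) ^ 2 = s ^ 2 * (1 - Δ) - Γ ^ 2 := by
    nlinarith [hs2, hr2]
  have haux : 0 < s ^ 2 * (1 - Δ) - Γ ^ 2 * (2 - Δ) := by
    nlinarith [mul_nonneg hr0 (by linarith : (0:ℝ) ≤ 1 - Δ)]
  have hsd : 0 < s ^ 2 - Δ / 4 := by nlinarith
  have key2 : (Γ ^ 2) ^ 2 < (s ^ 2 - Γ ^ 2) * (s ^ 2 - Δ / 4) ^ 2 := by
    have hrw : (s ^ 2 - Γ ^ 2) * (s ^ 2 - Δ / 4) ^ 2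
        = (s ^ 2 - Γ ^ 2) * (s ^ 2 * (1 - Δ) - Γ ^ 2) := by rw [e1]
    rw [hrw]
    have hp := mul_pos (by positivity : (0:ℝ) < s ^ 2) haux
    have hid : (s ^ 2 - Γ ^ 2) * (s ^ 2 * (1 - Δ) - Γ ^ 2) - (Γ ^ 2) ^ 2
        = s ^ 2 * (s ^ 2 * (1 - Δ) - Γ ^ 2 * (2 - Δ)) := by ring
    linarith
  have key : Γ ^ 2 < s * q * (s ^ 2 - Δ / 4) := by
    have hnn : 0 ≤ s * q * (s ^ 2 - Δ / 4) := by positivity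
    refine lt_of_pow_lt_pow_left₀ 2 hnn ?_
    calc (Γ ^ 2) ^ 2 < (s ^ 2 - Γ ^ 2) * (s ^ 2 - Δ / 4) ^ 2 := key2
      _ = (s * q * (s ^ 2 - Δ / 4)) ^ 2 := by rw [mul_pow, hsq2]
  intro δm
  have hδm : 1 - δm = s := by simp [δm]
  rw [hδm]
  have expand : Δ / 4 * s⁻¹ ^ 2 + Γ ^ 2 * s⁻¹ ^ 3 / q
      = (Δ / 4 + Γ ^ 2 / (s * q)) / s ^ 2 := by
    field_simp
  rw [expand, div_lt_one (by positivity)]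
  have : Γ ^ 2 / (s * q) < s ^ 2 - Δ / 4 := by
    rw [div_lt_iff₀ (by positivity)]
    nlinarith [key]
  linarith
end

section
/- Fix Δ ≥ 0, Γ ≥ 0 with Δ + 4Γ² < 1, and consider the scalar map f(x) = -(Δ/4)/(1+x) - (1 - √(1 - Γ²/(1+x)²)) on the interval [-δ₋, 0], where δ₋ = 1 - √((1/2)(1 - Δ/2 + √(1 - (Δ + 4Γ²)))). Then f maps [-δ₋, 0] into itself and has a unique fixed point x* ∈ [-δ₋, 0]. -/
open Real

set_option maxHeartbeats 1000000 in
/-- The scalar fixed-point power flow map `f(x) = -(Δ/4)/(1+x) - (1 - √(1 - Γ²/(1+x)²))`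
maps `[-δ₋, 0]` into itself and has a unique fixed point there. -/
theorem stmt_16 (Δ Γ : ℝ) (hΔ : 0 ≤ Δ) (hΓ : 0 ≤ Γ) (h : Δ + 4 * Γ ^ 2 < 1) :
    let δm := 1 - Real.sqrt ((1 / 2) * (1 - Δ / 2 + Real.sqrt (1 - (Δ + 4 * Γ ^ 2))))
    let f : ℝ → ℝ := fun x =>
      -(Δ / 4) / (1 + x) - (1 - Real.sqrt (1 - Γ ^ 2 / (1 + x) ^ 2))
    Set.MapsTo f (Set.Icc (-δm) 0) (Set.Icc (-δm) 0) ∧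
      ∃! x : ℝ, x ∈ Set.Icc (-δm) 0 ∧ f x = x := by
  intro δm f
  have hdm : δm = 1 - Real.sqrt ((1 / 2) * (1 - Δ / 2 + Real.sqrt (1 - (Δ + 4 * Γ ^ 2)))) := rfl
  have hf : f = fun x =>
      -(Δ / 4) / (1 + x) - (1 - Real.sqrt (1 - Γ ^ 2 / (1 + x) ^ 2)) := rfl
  set s := Real.sqrt (1 - (Δ + 4 * Γ ^ 2)) with hs_def
  have hs0 : 0 ≤ s := Real.sqrt_nonneg _
  have hs_sq : s ^ 2 = 1 - (Δ + 4 * Γ ^ 2) := Real.sq_sqrt (by linarith)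
  have hs1 : s ≤ 1 := by
    rw [hs_def]
    exact Real.sqrt_le_one.mpr (by nlinarith [sq_nonneg Γ])
  set a := (1 / 2) * (1 - Δ / 2 + s) with ha_def
  have h2a : 2 * a = 1 - Δ / 2 + s := by rw [ha_def]; ring
  have hs_eq : s = 2 * a - 1 + Δ / 2 := by linarith
  have ha_pos : 0 < a := by nlinarith [sq_nonneg Γ, hs0, h2a]
  have ha1 : a ≤ 1 := by linarith [h2a, hs1, hΔ]
  set b := Real.sqrt a with hb_def
  have hb_sq : b ^ 2 = a := Real.sq_sqrt ha_pos.le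
  have hb_pos : 0 < b := Real.sqrt_pos.mpr ha_pos
  have hb1 : b ≤ 1 := by rw [hb_def]; exact Real.sqrt_le_one.mpr ha1
  have hdmb : δm = 1 - b := hdm
  have hkey : (a + Δ / 4) ^ 2 = a - Γ ^ 2 := by
    have h1 : (2 * a - 1 + Δ / 2) ^ 2 = 1 - (Δ + 4 * Γ ^ 2) := by rw [← hs_eq]; exact hs_sq
    linear_combination h1 / 4
  have haΓ : Γ ^ 2 ≤ a := by linarith [hkey, sq_nonneg (a + Δ / 4)]
  -- the key inequality: for u ∈ [b, 1], b + (Δ/4)/u ≤ √(1 - Γ²/u²)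
  have hmain : ∀ u : ℝ, b ≤ u → b + Δ / 4 / u ≤ Real.sqrt (1 - Γ ^ 2 / u ^ 2) := by
    intro u hub
    have hu0 : 0 < u := lt_of_lt_of_le hb_pos hub
    have hdiv : Δ / 4 / u * u = Δ / 4 := div_mul_cancel₀ _ hu0.ne'
    have hdiv2 : Γ ^ 2 / u ^ 2 * u ^ 2 = Γ ^ 2 := div_mul_cancel₀ _ (pow_ne_zero 2 hu0.ne')
    have hqid : (1 - a) * u ^ 2 - (Δ / 2) * b * u - Γ ^ 2 - Δ ^ 2 / 16
        = (1 - a) * (u - b) ^ 2 + b * (1 - s) * (u - b) := by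
      linear_combination (b * u - b ^ 2) * hs_eq + (1 - a - Δ / 2) * hb_sq - hkey
    have hq : 0 ≤ (1 - a) * u ^ 2 - (Δ / 2) * b * u - Γ ^ 2 - Δ ^ 2 / 16 := by
      have t1 : 0 ≤ (1 - a) * (u - b) ^ 2 := mul_nonneg (by linarith) (sq_nonneg _)
      have t2 : 0 ≤ b * (1 - s) * (u - b) :=
        mul_nonneg (mul_nonneg hb_pos.le (by linarith)) (by linarith)
      linarith [hqid]
    have hm : (b * u + Δ / 4) ^ 2 ≤ u ^ 2 - Γ ^ 2 := by
      have expand : (b * u + Δ / 4) ^ 2 = a * u ^ 2 + (Δ / 2) * b * u + Δ ^ 2 / 16 := by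
        linear_combination u ^ 2 * hb_sq
      linarith [hq, expand]
    have hrhs : 0 < b + Δ / 4 / u := by positivity
    rw [Real.le_sqrt' hrhs]
    have e1 : (b + Δ / 4 / u) ^ 2 * u ^ 2 = (b * u + Δ / 4) ^ 2 := by
      rw [show (b + Δ / 4 / u) ^ 2 * u ^ 2 = (b * u + Δ / 4 / u * u) ^ 2 from by ring, hdiv]
    have e2 : (1 - Γ ^ 2 / u ^ 2) * u ^ 2 = u ^ 2 - Γ ^ 2 := by
      rw [sub_mul, hdiv2, one_mul]
    have hmul : (b + Δ / 4 / u) ^ 2 * u ^ 2 ≤ (1 - Γ ^ 2 / u ^ 2) * u ^ 2 := by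
      rw [e1, e2]; exact hm
    exact le_of_mul_le_mul_right hmul (pow_pos hu0 2)
  constructor
  · -- MapsTo
    intro x hx
    obtain ⟨hx1, hx2⟩ := hx
    rw [hdmb] at hx1
    set u := 1 + x with hu_def
    have hub : b ≤ u := by simp only [hu_def]; linarith
    have hu0 : 0 < u := lt_of_lt_of_le hb_pos hub
    have hneg : -(Δ / 4) / u = -(Δ / 4 / u) := neg_div u (Δ / 4)
    have hsle : Real.sqrt (1 - Γ ^ 2 / u ^ 2) ≤ 1 := by
      rw [Real.sqrt_le_one]
      have : 0 ≤ Γ ^ 2 / u ^ 2 := by positivity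
      linarith
    have hsge := hmain u hub
    simp only [hf]
    constructor
    · rw [hdmb]; linarith
    · have : 0 ≤ Δ / 4 / u := by positivity
      linarith
  · -- unique fixed point
    refine ⟨b - 1, ⟨⟨by rw [hdmb]; linarith, by linarith⟩, ?_⟩, ?_⟩
    · -- b - 1 is a fixed point
      simp only [hf]
      have hb' : (1 : ℝ) + (b - 1) = b := by ring
      rw [hb']
      have harg : 1 - Γ ^ 2 / b ^ 2 = ((a + Δ / 4) / b) ^ 2 := by
        rw [div_pow, hb_sq, hkey]
        field_simp
      rw [harg, Real.sqrt_sq (by positivity)]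
      have hab : a / b = b := by
        rw [← hb_sq, sq, mul_div_assoc, div_self hb_pos.ne', mul_one]
      rw [neg_div, add_div, hab]
      ring
    · -- uniqueness
      rintro y ⟨⟨hy1, hy2⟩, hfy⟩
      rw [hdmb] at hy1
      simp only [hf] at hfy
      set u := 1 + y with hu_def
      have hub : b ≤ u := by simp only [hu_def]; linarith
      have hu0 : 0 < u := lt_of_lt_of_le hb_pos hub
      have hu2a : a ≤ u ^ 2 := by
        rw [← hb_sq]; exact pow_le_pow_left₀ hb_pos.le hub 2
      have harg0 : 0 ≤ 1 - Γ ^ 2 / u ^ 2 := by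
        rw [sub_nonneg]
        exact (div_le_one (pow_pos hu0 2)).mpr (le_trans haΓ hu2a)
      have hneg : -(Δ / 4) / u = -(Δ / 4 / u) := neg_div u (Δ / 4)
      have heq : Real.sqrt (1 - Γ ^ 2 / u ^ 2) = u + Δ / 4 / u := by
        rw [hneg] at hfy
        have : y = u - 1 := by simp only [hu_def]; ring
        linarith [hfy]
      have hdiv : Δ / 4 / u * u = Δ / 4 := div_mul_cancel₀ _ hu0.ne'
      have hdiv2 : Γ ^ 2 / u ^ 2 * u ^ 2 = Γ ^ 2 := div_mul_cancel₀ _ (pow_ne_zero 2 hu0.ne')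
      have hsq : 1 - Γ ^ 2 / u ^ 2 = (u + Δ / 4 / u) ^ 2 := by
        rw [← heq, Real.sq_sqrt harg0]
      have h2 : u ^ 2 - Γ ^ 2 = (u ^ 2 + Δ / 4) ^ 2 := by
        have e1 : (u + Δ / 4 / u) ^ 2 * u ^ 2 = (u ^ 2 + Δ / 4) ^ 2 := by
          rw [show (u + Δ / 4 / u) ^ 2 * u ^ 2 = (u * u + Δ / 4 / u * u) ^ 2 from by ring, hdiv]
          ring
        have e2 : (1 - Γ ^ 2 / u ^ 2) * u ^ 2 = u ^ 2 - Γ ^ 2 := by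
          rw [sub_mul, hdiv2, one_mul]
        rw [← e2, hsq, e1]
      have hprod : (u ^ 2 - a) * (u ^ 2 - a + s) = 0 := by
        linear_combination (-1 : ℝ) * h2 - hkey + (u ^ 2 - a) * hs_eq
      have hle : u ^ 2 ≤ a := by
        rcases mul_eq_zero.mp hprod with h1 | h1
        · linarith
        · linarith
      have hua : u ^ 2 = a := le_antisymm hle hu2a
      have huB : u = b := by
        rw [hb_def, ← hua, Real.sqrt_sq hu0.le]
      linarith [hu_def, huB]
end
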